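/- Under the setup of the randomized response W of X2 with parameter α2, if I(Ū; X1, X2 | Y) ≤ log(I(X1, X2; Y) + 1) + 4, then I(Ū, W; X1, X2 | Y) ≤ (1 - α2)(log(I(X1, X2; Y) + 1) + 4) + α2 H(X1, X2 | Y). -/

import Mathlib

open scoped Classical
open Real

/-- Probability that random variable `X` takes value `a` under pmf `p` on sample space `Ω`. -/
noncomputable def pr {Ω α : Type} [Fintype Ω] (p : Ω → ℝ) (X : Ω → α) (a : α) : ℝ :=
  ∑ ω, if X ω = a then p ω else 0

/-- Shannon entropy (base 2) of the random variable `X`. -/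
noncomputable def ent {Ω α : Type} [Fintype Ω] [Fintype α] (p : Ω → ℝ) (X : Ω → α) : ℝ :=
  -∑ a, pr p X a * Real.logb 2 (pr p X a)

/-- Conditional entropy `H(X|Y)`. -/
noncomputable def entC {Ω α β : Type} [Fintype Ω] [Fintype α] [Fintype β]
    (p : Ω → ℝ) (X : Ω → α) (Y : Ω → β) : ℝ :=
  ent p (fun ω => (X ω, Y ω)) - ent p Y

/-- Mutual information `I(X;Y)`. -/
noncomputable def mi {Ω α β : Type} [Fintype Ω] [Fintype α] [Fintype β]
    (p : Ω → ℝ) (X : Ω → α) (Y : Ω → β) : ℝ :=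
  ent p X + ent p Y - ent p (fun ω => (X ω, Y ω))

/-- Conditional mutual information `I(X;U|Y)`. -/
noncomputable def miC {Ω α β γ : Type} [Fintype Ω] [Fintype α] [Fintype β] [Fintype γ]
    (p : Ω → ℝ) (X : Ω → α) (U : Ω → β) (Y : Ω → γ) : ℝ :=
  entC p X Y + entC p U Y - entC p (fun ω => (X ω, U ω)) Y

/-- Independence of random variables `X` and `Y` under pmf `p`. -/
def IndepRV {Ω α β : Type} [Fintype Ω] (p : Ω → ℝ) (X : Ω → α) (Y : Ω → β) : Prop :=
  ∀ a b, pr p (fun ω => (X ω, Y ω)) (a, b) = pr p X a * pr p Y b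

section Aux
variable {Ω : Type} [Fintype Ω] (p : Ω → ℝ)

lemma pr_nonneg {α : Type} (hp0 : ∀ ω, 0 ≤ p ω) (X : Ω → α) (a : α) : 0 ≤ pr p X a :=
  Finset.sum_nonneg fun ω _ => by split_ifs; exacts [hp0 ω, le_rfl]

lemma pr_sum_one {α : Type} [Fintype α] (hp1 : ∑ ω, p ω = 1) (X : Ω → α) :
    ∑ a, pr p X a = 1 := by
  unfold pr
  rw [Finset.sum_comm]
  simp only [Finset.sum_ite_eq, Finset.mem_univ, if_true]
  exact hp1

lemma pr_comp {α β : Type} [Fintype α] (X : Ω → α) (f : α → β) (b : β) :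
    pr p (fun ω => f (X ω)) b = ∑ a, if f a = b then pr p X a else 0 := by
  have e : ∀ a, (if f a = b then pr p X a else 0)
      = ∑ ω, if X ω = a then (if f a = b then p ω else 0) else 0 := by
    intro a
    by_cases h : f a = b <;> simp [h, pr]
  rw [Finset.sum_congr rfl fun a _ => e a, Finset.sum_comm]
  unfold pr
  refine Finset.sum_congr rfl fun ω _ => ?_
  rw [Finset.sum_ite_eq]
  simp

end Aux

section Aux2
variable {Ω : Type} [Fintype Ω] (p : Ω → ℝ)

lemma ent_comp_inj {α β : Type} [Fintype α] [Fintype β] (X : Ω → α) (f : α → β)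
    (hf : Function.Injective f) : ent p (fun ω => f (X ω)) = ent p X := by
  unfold ent
  congr 1
  have hpr : ∀ a, pr p (fun ω => f (X ω)) (f a) = pr p X a := by
    intro a; unfold pr
    refine Finset.sum_congr rfl fun ω _ => ?_
    simp [hf.eq_iff]
  have h0 : ∀ b ∈ Finset.univ, b ∉ Finset.univ.image f →
      pr p (fun ω => f (X ω)) b * Real.logb 2 (pr p (fun ω => f (X ω)) b) = 0 := by
    intro b _ hb
    have : pr p (fun ω => f (X ω)) b = 0 := by
      refine Finset.sum_eq_zero fun ω _ => ?_
      have hne : f (X ω) ≠ b := fun h => hb (h ▸ Finset.mem_image_of_mem f (Finset.mem_univ _))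
      simp [hne]
    simp [this]
  rw [← Finset.sum_subset (Finset.subset_univ (Finset.univ.image f)) h0,
    Finset.sum_image (fun a _ a' _ h => hf h)]
  exact Finset.sum_congr rfl fun a _ => by rw [hpr]

lemma ent_comp_le {α β : Type} [Fintype α] [Fintype β] (hp0 : ∀ ω, 0 ≤ p ω)
    (X : Ω → α) (f : α → β) : ent p (fun ω => f (X ω)) ≤ ent p X := by
  unfold ent
  rw [neg_le_neg_iff]
  have hq : ∀ b, pr p (fun ω => f (X ω)) b = ∑ a, if f a = b then pr p X a else 0 :=
    pr_comp p X f
  have hcollapse : ∑ b, pr p (fun ω => f (X ω)) b * Real.logb 2 (pr p (fun ω => f (X ω)) b)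
      = ∑ a, pr p X a * Real.logb 2 (pr p (fun ω => f (X ω)) (f a)) := by
    calc ∑ b, pr p (fun ω => f (X ω)) b * Real.logb 2 (pr p (fun ω => f (X ω)) b)
        = ∑ b, ∑ a, (if f a = b then
            pr p X a * Real.logb 2 (pr p (fun ω => f (X ω)) b) else 0) := by
          refine Finset.sum_congr rfl fun b _ => ?_
          rw [hq b, Finset.sum_mul]
          refine Finset.sum_congr rfl fun a _ => ?_
          split_ifs <;> simp
      _ = ∑ a, ∑ b, (if f a = b then
            pr p X a * Real.logb 2 (pr p (fun ω => f (X ω)) b) else 0) := Finset.sum_comm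
      _ = ∑ a, pr p X a * Real.logb 2 (pr p (fun ω => f (X ω)) (f a)) := by
          refine Finset.sum_congr rfl fun a _ => ?_
          rw [Finset.sum_ite_eq]
          simp
  rw [hcollapse]
  refine Finset.sum_le_sum fun a _ => ?_
  rcases eq_or_lt_of_le (pr_nonneg p hp0 X a) with h | h
  · rw [← h]; simp
  · have hle : pr p X a ≤ pr p (fun ω => f (X ω)) (f a) := by
      rw [hq]
      have := Finset.single_le_sum (f := fun a' => if f a' = f a then pr p X a' else 0)
        (fun a' _ => by split_ifs; exacts [pr_nonneg p hp0 X a', le_rfl]) (Finset.mem_univ a)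
      simpa using this
    exact mul_le_mul_of_nonneg_left
      (Real.logb_le_logb_of_le one_lt_two h hle) (le_of_lt h)

end Aux2

section Aux3
variable {Ω : Type} [Fintype Ω] (p : Ω → ℝ)

lemma ite_sum_pull {σ : Type} [Fintype σ] (c : Prop) [Decidable c] (f : σ → ℝ) :
    (if c then (∑ x, f x) else 0) = ∑ x, (if c then f x else 0) := by
  split_ifs <;> simp

lemma pr_comp_pair {σ τ τ' : Type} [Fintype τ] (Sv : Ω → σ) (V : Ω → τ) (g : τ → τ')
    (s : σ) (b : τ') :
    pr p (fun ω => (Sv ω, g (V ω))) (s, b)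
      = ∑ a, if g a = b then pr p (fun ω => (Sv ω, V ω)) (s, a) else 0 := by
  have e : ∀ a, (if g a = b then pr p (fun ω => (Sv ω, V ω)) (s, a) else 0)
      = ∑ ω, if (Sv ω, V ω) = (s, a) then (if g a = b then p ω else 0) else 0 := by
    intro a
    by_cases h : g a = b <;> simp [h, pr]
  rw [Finset.sum_congr rfl fun a _ => e a, Finset.sum_comm]
  unfold pr
  refine Finset.sum_congr rfl fun ω _ => ?_
  have e2 : ∀ a : τ, (if (Sv ω, V ω) = (s, a) then (if g a = b then p ω else 0) else 0)
      = (if V ω = a then (if Sv ω = s then (if g a = b then p ω else 0) else 0) else 0) := by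
    intro a
    by_cases h1 : V ω = a <;> by_cases h2 : Sv ω = s <;> simp [h1, h2, Prod.ext_iff]
  rw [Finset.sum_congr rfl fun a _ => e2 a, Finset.sum_ite_eq]
  by_cases h2 : Sv ω = s <;> by_cases h3 : g (V ω) = b <;> simp [h2, h3, Prod.ext_iff]

lemma indep_comp {σ τ τ' : Type} [Fintype σ] [Fintype τ] (Sv : Ω → σ) (V : Ω → τ) (g : τ → τ')
    (h : IndepRV p Sv V) : IndepRV p Sv (fun ω => g (V ω)) := by
  intro s b
  beta_reduce
  rw [pr_comp_pair p Sv V g s b, pr_comp p V g b, Finset.mul_sum]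
  refine Finset.sum_congr rfl fun a _ => ?_
  rw [h s a]
  split_ifs <;> simp

lemma ent_indep {σ τ : Type} [Fintype σ] [Fintype τ] (hp1 : ∑ ω, p ω = 1)
    (Sv : Ω → σ) (V : Ω → τ) (h : IndepRV p Sv V) :
    ent p (fun ω => (Sv ω, V ω)) = ent p Sv + ent p V := by
  unfold ent
  rw [← neg_add]
  congr 1
  rw [Fintype.sum_prod_type]
  have key : ∀ s v, pr p (fun ω => (Sv ω, V ω)) (s, v)
        * Real.logb 2 (pr p (fun ω => (Sv ω, V ω)) (s, v))
      = pr p Sv s * Real.logb 2 (pr p Sv s) * pr p V v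
        + pr p Sv s * (pr p V v * Real.logb 2 (pr p V v)) := by
    intro s v
    rw [h s v]
    by_cases hs : pr p Sv s = 0
    · simp [hs]
    by_cases hv : pr p V v = 0
    · simp [hv]
    rw [Real.logb_mul hs hv]; ring
  calc ∑ s, ∑ v, pr p (fun ω => (Sv ω, V ω)) (s, v)
          * Real.logb 2 (pr p (fun ω => (Sv ω, V ω)) (s, v))
      = ∑ s, ∑ v, (pr p Sv s * Real.logb 2 (pr p Sv s) * pr p V v
          + pr p Sv s * (pr p V v * Real.logb 2 (pr p V v))) := by
        exact Finset.sum_congr rfl fun s _ => Finset.sum_congr rfl fun v _ => key s v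
    _ = ∑ s, (pr p Sv s * Real.logb 2 (pr p Sv s) * ∑ v, pr p V v
          + pr p Sv s * ∑ v, pr p V v * Real.logb 2 (pr p V v)) := by
        refine Finset.sum_congr rfl fun s _ => ?_
        rw [Finset.sum_add_distrib, ← Finset.mul_sum, ← Finset.mul_sum]
    _ = ∑ s, (pr p Sv s * Real.logb 2 (pr p Sv s)
          + pr p Sv s * ∑ v, pr p V v * Real.logb 2 (pr p V v)) := by
        rw [pr_sum_one p hp1 V]; simp
    _ = (∑ s, pr p Sv s * Real.logb 2 (pr p Sv s))
          + (∑ s, pr p Sv s) * ∑ v, pr p V v * Real.logb 2 (pr p V v) := by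
        rw [Finset.sum_add_distrib, ← Finset.sum_mul]
    _ = _ := by rw [pr_sum_one p hp1 Sv]; ring

lemma sum_phi_smul {ι : Type} [Fintype ι] (c : ℝ) (hc : 0 ≤ c) (q : ι → ℝ)
    (hq0 : ∀ i, 0 ≤ q i) (hq1 : ∑ i, q i = 1) :
    ∑ i, (c * q i) * Real.logb 2 (c * q i)
      = c * Real.logb 2 c + c * ∑ i, q i * Real.logb 2 (q i) := by
  rcases eq_or_lt_of_le hc with h | h
  · simp [← h]
  have key : ∀ i, (c * q i) * Real.logb 2 (c * q i)
      = (q i * Real.logb 2 c) * c + c * (q i * Real.logb 2 (q i)) := by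
    intro i
    rcases eq_or_lt_of_le (hq0 i) with h2 | h2
    · simp [← h2]
    · rw [Real.logb_mul (ne_of_gt h) (ne_of_gt h2)]; ring
  rw [Finset.sum_congr rfl fun i _ => key i, Finset.sum_add_distrib,
    ← Finset.sum_mul, ← Finset.sum_mul, hq1, ← Finset.mul_sum]
  ring

end Aux3

section Main
variable {Ω : Type} [Fintype Ω] (p : Ω → ℝ)

/-- Entropy of the pair ((U, randomized response of X2), Y). -/
lemma ent_rr {β γ δ : Type} [Fintype β] [Fintype γ] [Fintype δ]
    (hp0 : ∀ ω, 0 ≤ p ω) (hp1 : ∑ ω, p ω = 1)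
    (S : Ω → Bool) (U : Ω → γ) (X2 : Ω → β) (Y : Ω → δ) (α2 : ℝ)
    (hα0 : 0 ≤ α2) (hα1 : α2 ≤ 1) (hS : pr p S true = α2)
    (hind : IndepRV p S (fun ω => (U ω, (X2 ω, Y ω)))) :
    ent p (fun ω => ((U ω, if S ω then some (X2 ω) else (none : Option β)), Y ω))
      = (-(α2 * Real.logb 2 α2) - (1 - α2) * Real.logb 2 (1 - α2))
        + (1 - α2) * ent p (fun ω => (U ω, Y ω))
        + α2 * ent p (fun ω => (U ω, (X2 ω, Y ω))) := by
  have hSfalse : pr p S false = 1 - α2 := by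
    have h := pr_sum_one p hp1 S
    rw [Fintype.sum_bool, hS] at h
    linarith
  have prW_none : ∀ (u : γ) (y : δ),
      pr p (fun ω => ((U ω, if S ω then some (X2 ω) else (none : Option β)), Y ω)) ((u, none), y)
        = (1 - α2) * pr p (fun ω => (U ω, Y ω)) (u, y) := by
    intro u y
    have h1 : pr p (fun ω => ((U ω, if S ω then some (X2 ω) else (none : Option β)), Y ω))
          ((u, none), y)
        = pr p (fun ω => (S ω, (U ω, Y ω))) (false, (u, y)) := by
      unfold pr
      refine Finset.sum_congr rfl fun ω _ => ?_
      cases hs : S ω <;> simp [hs, Prod.ext_iff]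
    have h2 : pr p (fun ω => (S ω, (U ω, Y ω))) (false, (u, y))
        = pr p S false * pr p (fun ω => (U ω, Y ω)) (u, y) :=
      indep_comp p S (fun ω => (U ω, (X2 ω, Y ω))) (fun v => (v.1, v.2.2)) hind false (u, y)
    rw [h1, h2, hSfalse]
  have prW_some : ∀ (u : γ) (x2 : β) (y : δ),
      pr p (fun ω => ((U ω, if S ω then some (X2 ω) else (none : Option β)), Y ω))
          ((u, some x2), y)
        = α2 * pr p (fun ω => (U ω, (X2 ω, Y ω))) (u, (x2, y)) := by
    intro u x2 y
    have h1 : pr p (fun ω => ((U ω, if S ω then some (X2 ω) else (none : Option β)), Y ω))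
          ((u, some x2), y)
        = pr p (fun ω => (S ω, (U ω, (X2 ω, Y ω)))) (true, (u, (x2, y))) := by
      unfold pr
      refine Finset.sum_congr rfl fun ω _ => ?_
      cases hs : S ω <;> simp [hs, Prod.ext_iff, and_assoc]
    have h2 : pr p (fun ω => (S ω, (U ω, (X2 ω, Y ω)))) (true, (u, (x2, y)))
        = pr p S true * pr p (fun ω => (U ω, (X2 ω, Y ω))) (u, (x2, y)) :=
      indep_comp p S (fun ω => (U ω, (X2 ω, Y ω))) (fun v => v) hind true (u, (x2, y))
    rw [h1, h2, hS]
  have key : (∑ a : (γ × Option β) × δ,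
        pr p (fun ω => ((U ω, if S ω then some (X2 ω) else (none : Option β)), Y ω)) a
          * Real.logb 2 (pr p
            (fun ω => ((U ω, if S ω then some (X2 ω) else (none : Option β)), Y ω)) a))
      = ((1 - α2) * Real.logb 2 (1 - α2)
          + (1 - α2) * ∑ q : γ × δ, pr p (fun ω => (U ω, Y ω)) q
              * Real.logb 2 (pr p (fun ω => (U ω, Y ω)) q))
        + (α2 * Real.logb 2 α2
          + α2 * ∑ q : γ × (β × δ), pr p (fun ω => (U ω, (X2 ω, Y ω))) q
              * Real.logb 2 (pr p (fun ω => (U ω, (X2 ω, Y ω))) q)) := by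
    calc (∑ a : (γ × Option β) × δ,
          pr p (fun ω => ((U ω, if S ω then some (X2 ω) else (none : Option β)), Y ω)) a
            * Real.logb 2 (pr p
              (fun ω => ((U ω, if S ω then some (X2 ω) else (none : Option β)), Y ω)) a))
        = ∑ u, ∑ w, ∑ y,
            pr p (fun ω => ((U ω, if S ω then some (X2 ω) else (none : Option β)), Y ω)) ((u, w), y)
              * Real.logb 2 (pr p
                (fun ω => ((U ω, if S ω then some (X2 ω) else (none : Option β)), Y ω)) ((u, w), y)) := by
          rw [Fintype.sum_prod_type, Fintype.sum_prod_type]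
      _ = ∑ u, ((∑ y,
            pr p (fun ω => ((U ω, if S ω then some (X2 ω) else (none : Option β)), Y ω)) ((u, none), y)
              * Real.logb 2 (pr p
                (fun ω => ((U ω, if S ω then some (X2 ω) else (none : Option β)), Y ω)) ((u, none), y)))
          + ∑ x2, ∑ y,
            pr p (fun ω => ((U ω, if S ω then some (X2 ω) else (none : Option β)), Y ω)) ((u, some x2), y)
              * Real.logb 2 (pr p
                (fun ω => ((U ω, if S ω then some (X2 ω) else (none : Option β)), Y ω)) ((u, some x2), y))) :=
          Finset.sum_congr rfl fun u _ => Fintype.sum_option _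
      _ = (∑ u, ∑ y,
            pr p (fun ω => ((U ω, if S ω then some (X2 ω) else (none : Option β)), Y ω)) ((u, none), y)
              * Real.logb 2 (pr p
                (fun ω => ((U ω, if S ω then some (X2 ω) else (none : Option β)), Y ω)) ((u, none), y)))
          + ∑ u, ∑ x2, ∑ y,
            pr p (fun ω => ((U ω, if S ω then some (X2 ω) else (none : Option β)), Y ω)) ((u, some x2), y)
              * Real.logb 2 (pr p
                (fun ω => ((U ω, if S ω then some (X2 ω) else (none : Option β)), Y ω)) ((u, some x2), y)) :=
          Finset.sum_add_distrib
      _ = (∑ q : γ × δ, ((1 - α2) * pr p (fun ω => (U ω, Y ω)) q)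
              * Real.logb 2 ((1 - α2) * pr p (fun ω => (U ω, Y ω)) q))
          + ∑ q : γ × (β × δ), (α2 * pr p (fun ω => (U ω, (X2 ω, Y ω))) q)
              * Real.logb 2 (α2 * pr p (fun ω => (U ω, (X2 ω, Y ω))) q) := by
          congr 1
          · rw [Fintype.sum_prod_type]
            exact Finset.sum_congr rfl fun u _ => Finset.sum_congr rfl fun y _ => by
              rw [prW_none u y]
          · rw [Fintype.sum_prod_type]
            refine Finset.sum_congr rfl fun u _ => ?_
            rw [Fintype.sum_prod_type]
            exact Finset.sum_congr rfl fun x2 _ =>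
              Finset.sum_congr rfl fun y _ => by rw [prW_some u x2 y]
      _ = _ := by
          rw [sum_phi_smul (1 - α2) (by linarith) _
                (fun q => pr_nonneg p hp0 _ q) (pr_sum_one p hp1 _),
              sum_phi_smul α2 hα0 _
                (fun q => pr_nonneg p hp0 _ q) (pr_sum_one p hp1 _)]
  unfold ent
  rw [key]
  ring

end Main

/-- If I(Ū;X1,X2|Y) ≤ log₂(I(X1,X2;Y)+1) + 4, then with W the randomized response of X2:
I(Ū,W;X1,X2|Y) ≤ (1-α2)(log₂(I(X1,X2;Y)+1) + 4) + α2 H(X1,X2|Y). -/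
theorem randomized_response_bound_b {Ω α β γ δ : Type}
    [Fintype Ω] [Fintype α] [Fintype β] [Fintype γ] [Fintype δ]
    (p : Ω → ℝ) (hp0 : ∀ ω, 0 ≤ p ω) (hp1 : ∑ ω, p ω = 1)
    (X1 : Ω → α) (X2 : Ω → β) (Y : Ω → δ) (U : Ω → γ) (S : Ω → Bool) (α2 : ℝ)
    (hα0 : 0 ≤ α2) (hα1 : α2 ≤ 1) (hS : pr p S true = α2)
    (hSind : IndepRV p S (fun ω => (X1 ω, X2 ω, Y ω, U ω)))
    (hU : miC p U (fun ω => (X1 ω, X2 ω)) Y ≤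
      Real.logb 2 (mi p (fun ω => (X1 ω, X2 ω)) Y + 1) + 4) :
    miC p (fun ω => (U ω, (if S ω then some (X2 ω) else none : Option β)))
        (fun ω => (X1 ω, X2 ω)) Y ≤
      (1 - α2) * (Real.logb 2 (mi p (fun ω => (X1 ω, X2 ω)) Y + 1) + 4)
        + α2 * entC p (fun ω => (X1 ω, X2 ω)) Y := by
  have hSfalse : pr p S false = 1 - α2 := by
    have h := pr_sum_one p hp1 S
    rw [Fintype.sum_bool, hS] at h
    linarith
  have hentS : ent p S = -(α2 * Real.logb 2 α2) - (1 - α2) * Real.logb 2 (1 - α2) := by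
    unfold ent
    rw [Fintype.sum_bool, hS, hSfalse]
    ring
  have hA : ent p (fun ω => ((U ω, if S ω then some (X2 ω) else (none : Option β)), Y ω))
      = (-(α2 * Real.logb 2 α2) - (1 - α2) * Real.logb 2 (1 - α2))
        + (1 - α2) * ent p (fun ω => (U ω, Y ω))
        + α2 * ent p (fun ω => (U ω, (X2 ω, Y ω))) :=
    ent_rr p hp0 hp1 S U X2 Y α2 hα0 hα1 hS
      (indep_comp p S (fun ω => (X1 ω, X2 ω, Y ω, U ω))
        (fun v => (v.2.2.2, (v.2.1, v.2.2.1))) hSind)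
  have hGinj : Function.Injective (fun q : Bool × (γ × ((α × β) × δ)) =>
      (((q.2.1, if q.1 then some q.2.2.1.2 else (none : Option β)), q.2.2.1), q.2.2.2)) := by
    rintro ⟨s, u, z, y⟩ ⟨s', u', z', y'⟩ hq
    simp only [Prod.mk.injEq] at hq
    obtain ⟨⟨⟨hu, hw⟩, hz⟩, hy⟩ := hq
    cases s <;> cases s' <;> simp_all
  have hC1 : ent p (fun ω => (((U ω, if S ω then some (X2 ω) else (none : Option β)),
        (X1 ω, X2 ω)), Y ω))
      = ent p (fun ω => (S ω, (U ω, ((X1 ω, X2 ω), Y ω)))) :=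
    ent_comp_inj p (fun ω => (S ω, (U ω, ((X1 ω, X2 ω), Y ω)))) _ hGinj
  have hC2 : ent p (fun ω => (S ω, (U ω, ((X1 ω, X2 ω), Y ω))))
      = ent p S + ent p (fun ω => (U ω, ((X1 ω, X2 ω), Y ω))) :=
    ent_indep p hp1 S (fun ω => (U ω, ((X1 ω, X2 ω), Y ω)))
      (indep_comp p S (fun ω => (X1 ω, X2 ω, Y ω, U ω))
        (fun v => (v.2.2.2, ((v.1, v.2.1), v.2.2.1))) hSind)
  have hfinj : Function.Injective (fun q : γ × ((α × β) × δ) => ((q.1, q.2.1), q.2.2)) := by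
    rintro ⟨u, z, y⟩ ⟨u', z', y'⟩ hq
    simp_all [Prod.mk.injEq]
  have hUZY : ent p (fun ω => ((U ω, (X1 ω, X2 ω)), Y ω))
      = ent p (fun ω => (U ω, ((X1 ω, X2 ω), Y ω))) :=
    ent_comp_inj p (fun ω => (U ω, ((X1 ω, X2 ω), Y ω))) _ hfinj
  have hmono : ent p (fun ω => (U ω, (X2 ω, Y ω)))
      ≤ ent p (fun ω => (U ω, ((X1 ω, X2 ω), Y ω))) :=
    ent_comp_le p hp0 (fun ω => (U ω, ((X1 ω, X2 ω), Y ω)))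
      (fun q => (q.1, (q.2.1.2, q.2.2)))
  simp only [miC, entC] at hU ⊢
  have hU' : ent p (fun ω => (U ω, Y ω)) + ent p (fun ω => ((X1 ω, X2 ω), Y ω))
      - ent p (fun ω => (U ω, ((X1 ω, X2 ω), Y ω))) - ent p Y
      ≤ Real.logb 2 (mi p (fun ω => (X1 ω, X2 ω)) Y + 1) + 4 := by
    linarith [hU, hUZY]
  have h1 : (1 - α2) * (ent p (fun ω => (U ω, Y ω)) + ent p (fun ω => ((X1 ω, X2 ω), Y ω))
        - ent p (fun ω => (U ω, ((X1 ω, X2 ω), Y ω))) - ent p Y)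
      ≤ (1 - α2) * (Real.logb 2 (mi p (fun ω => (X1 ω, X2 ω)) Y + 1) + 4) :=
    mul_le_mul_of_nonneg_left hU' (by linarith)
  have h2 : α2 * (ent p (fun ω => (U ω, (X2 ω, Y ω))) + ent p (fun ω => ((X1 ω, X2 ω), Y ω))
        - ent p (fun ω => (U ω, ((X1 ω, X2 ω), Y ω))) - ent p Y)
      ≤ α2 * (ent p (fun ω => ((X1 ω, X2 ω), Y ω)) - ent p Y) :=
    mul_le_mul_of_nonneg_left (by linarith [hmono]) hα0
  linarith [hA, hC1, hC2, hentS, h1, h2]
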